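/- arXiv:1611.04787 — 2 statements merged into one kernel-verified Lean document; each statement's English description precedes it below -/
import Mathlib

section
/- Let X be a normed linear space, A, B ⊆ X closed, and x̄ ∈ A ∩ B. If there exist α ∈ (0,1) and δ > 0 such that α·d(x, A∩B) ≤ d(x,B) for all x ∈ A ∩ B_δ(x̄), then {A,B} is subtransversal at x̄ with constant α' = 1/(2/α + 1): there exists δ' > 0 such that α'·d(x, A∩B) ≤ max{d(x,A), d(x,B)} for all x ∈ B_{δ'}(x̄). -/
open Metric

/-- The one-sided estimate on A near x̄ implies subtransversality with
constant 1/(2/α + 1). -/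
theorem stmt2 {X : Type*} [NormedAddCommGroup X] [NormedSpace ℝ X]
    (A B : Set X) (hA : A.Nonempty) (hB : B.Nonempty)
    (hAc : IsClosed A) (hBc : IsClosed B) (xbar : X) (hx : xbar ∈ A ∩ B)
    (α δ : ℝ) (hα : α ∈ Set.Ioo (0:ℝ) 1) (hδ : 0 < δ)
    (h : ∀ x ∈ A ∩ ball xbar δ, α * infDist x (A ∩ B) ≤ infDist x B) :
    ∃ δ' > (0:ℝ), ∀ x ∈ ball xbar δ',
      (1 / (2 / α + 1)) * infDist x (A ∩ B) ≤ max (infDist x A) (infDist x B) := by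
  obtain ⟨hα0, hα1⟩ := hα
  have hc : 0 < 2 / α + 1 := by positivity
  refine ⟨δ / 3, by positivity, fun x hxb => ?_⟩
  set m := max (infDist x A) (infDist x B) with hm
  -- key: infDist x (A ∩ B) ≤ (2/α+1) * m
  have key : infDist x (A ∩ B) ≤ (2 / α + 1) * m := by
    refine le_of_forall_pos_le_add fun ε hε => ?_
    set ε' := min (ε * α / (α + 1)) (δ / 3) with hε'
    have hε'0 : 0 < ε' := lt_min (by positivity) (by positivity)
    have hε'δ : ε' ≤ δ / 3 := min_le_right _ _
    -- pick a ∈ A close to x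
    have hlt : infDist x A < infDist x A + ε' := by linarith
    obtain ⟨a, haA, had⟩ := (infDist_lt_iff hA).mp hlt
    have hdA : infDist x A ≤ dist x xbar := by
      simpa using infDist_le_dist_of_mem hx.1
    have hdB : infDist x B ≤ dist x xbar := by
      simpa using infDist_le_dist_of_mem hx.2
    have hxδ : dist x xbar < δ / 3 := mem_ball.mp hxb
    have hmA : infDist x A ≤ m := le_max_left _ _
    have hmB : infDist x B ≤ m := le_max_right _ _
    have hm0 : 0 ≤ m := le_trans infDist_nonneg hmA
    have hmδ : m < δ / 3 := max_lt (lt_of_le_of_lt hdA hxδ) (lt_of_le_of_lt hdB hxδ)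
    -- a ∈ ball xbar δ
    have haball : a ∈ ball xbar δ := by
      have : dist a xbar ≤ dist a x + dist x xbar := dist_triangle _ _ _
      have h1 : dist a x < infDist x A + ε' := by rwa [dist_comm] at had
      have : dist a xbar < δ / 3 + ε' + δ / 3 := by
        calc dist a xbar ≤ dist a x + dist x xbar := dist_triangle _ _ _
          _ < (infDist x A + ε') + δ / 3 := by linarith
          _ ≤ δ / 3 + ε' + δ / 3 := by linarith [lt_of_le_of_lt hdA hxδ]
      rw [mem_ball]
      linarith
    have ha := h a ⟨haA, haball⟩
    have hIaB : infDist a B ≤ infDist x B + dist a x :=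
      infDist_le_infDist_add_dist
    have hIx : infDist x (A ∩ B) ≤ infDist a (A ∩ B) + dist x a :=
      infDist_le_infDist_add_dist
    have hIa : infDist a (A ∩ B) ≤ (infDist x B + dist a x) / α := by
      rw [le_div_iff₀ hα0, mul_comm]
      exact ha.trans hIaB
    have hdax : dist x a < m + ε' := lt_of_lt_of_le had (by linarith)
    have hdax' : dist a x < m + ε' := by rwa [dist_comm] at hdax
    have hεterm : ε' * (α + 1) / α ≤ ε := by
      have h1 : ε' ≤ ε * α / (α + 1) := min_le_left _ _
      rw [div_le_iff₀ hα0]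
      calc ε' * (α + 1) ≤ (ε * α / (α + 1)) * (α + 1) := by
            apply mul_le_mul_of_nonneg_right h1; linarith
        _ = ε * α := by field_simp
    calc infDist x (A ∩ B) ≤ infDist a (A ∩ B) + dist x a := hIx
      _ ≤ (infDist x B + dist a x) / α + dist x a := by linarith
      _ ≤ (m + (m + ε')) / α + (m + ε') := by
          have : (infDist x B + dist a x) / α ≤ (m + (m + ε')) / α := by
            gcongr
          linarith
      _ = (2 / α + 1) * m + ε' * (α + 1) / α := by field_simp; ring
      _ ≤ (2 / α + 1) * m + ε := by linarith
  rw [div_mul_eq_mul_div, one_mul, div_le_iff₀ hc, mul_comm]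
  exact key
end

section
/- Let X be a normed linear space, f(x₁,x₂,x) = max{‖x₁−x‖, ‖x₂−x‖}, ρ > 0, and a, b, x ∈ X with ‖x−a‖ < ‖x−b‖. For t > 0 let u_t = x − t(x−b). Then for all sufficiently small t > 0: f(a,b,u_t) = (1−t)‖x−b‖, ‖(a,b,u_t) − (a,b,x)‖_ρ = t‖x−b‖, and hence (f(a,b,x) − f(a,b,u_t))/‖(a,b,u_t)−(a,b,x)‖_ρ = 1. -/
/-- If ‖x-a‖ < ‖x-b‖ then for u_t = x - t(x-b) and all small t > 0 one has
f(a,b,u_t) = (1-t)‖x-b‖, ‖(a,b,u_t)-(a,b,x)‖_ρ = t‖x-b‖, and the difference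
quotient equals 1. -/
theorem stmt12 {X : Type*} [NormedAddCommGroup X] [NormedSpace ℝ X]
    (ρ : ℝ) (hρ : 0 < ρ) (a b x : X) (h : ‖x - a‖ < ‖x - b‖) :
    ∃ t₀ > (0:ℝ), ∀ t ∈ Set.Ioo (0:ℝ) t₀,
      max ‖a - (x - t • (x - b))‖ ‖b - (x - t • (x - b))‖ = (1 - t) * ‖x - b‖ ∧
      max ‖(x - t • (x - b)) - x‖ (max (ρ * ‖a - a‖) (ρ * ‖b - b‖)) = t * ‖x - b‖ ∧
      (max ‖a - x‖ ‖b - x‖ - (1 - t) * ‖x - b‖) / (t * ‖x - b‖) = 1 := by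
  have hb : 0 < ‖x - b‖ := lt_of_le_of_lt (norm_nonneg _) h
  refine ⟨(‖x - b‖ - ‖x - a‖) / (2 * ‖x - b‖), div_pos (by linarith) (by positivity), ?_⟩
  rintro t ⟨ht0, ht1⟩
  have ht2 : 2 * t * ‖x - b‖ < ‖x - b‖ - ‖x - a‖ := by
    have := (lt_div_iff₀ (by positivity : (0:ℝ) < 2 * ‖x - b‖)).mp ht1
    nlinarith
  have htlt : t < 1 := by nlinarith [norm_nonneg (x - a)]
  have hbu : b - (x - t • (x - b)) = (1 - t) • (b - x) := by
    module
  have hbn : ‖b - (x - t • (x - b))‖ = (1 - t) * ‖x - b‖ := by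
    rw [hbu, norm_smul, Real.norm_eq_abs, abs_of_nonneg (by linarith), norm_sub_rev]
  have han : ‖a - (x - t • (x - b))‖ < (1 - t) * ‖x - b‖ := by
    have h1 : ‖a - (x - t • (x - b))‖ ≤ ‖a - x‖ + t * ‖x - b‖ := by
      have e : a - (x - t • (x - b)) = (a - x) + t • (x - b) := by abel
      calc ‖a - (x - t • (x - b))‖ = ‖(a - x) + t • (x - b)‖ := by rw [e]
        _ ≤ ‖a - x‖ + ‖t • (x - b)‖ := norm_add_le _ _
        _ = ‖a - x‖ + t * ‖x - b‖ := by
            rw [norm_smul, Real.norm_eq_abs, abs_of_pos ht0]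
    have : ‖a - x‖ = ‖x - a‖ := norm_sub_rev _ _
    nlinarith
  have hux : ‖(x - t • (x - b)) - x‖ = t * ‖x - b‖ := by
    have : (x - t • (x - b)) - x = -(t • (x - b)) := by abel
    rw [this, norm_neg, norm_smul, Real.norm_eq_abs, abs_of_pos ht0]
  refine ⟨?_, ?_, ?_⟩
  · rw [max_eq_right (by rw [hbn]; exact han.le)]; exact hbn
  · simp only [sub_self, norm_zero, mul_zero, max_self]
    rw [hux, max_eq_left (by positivity)]
  · have hax : max ‖a - x‖ ‖b - x‖ = ‖x - b‖ := by
      rw [max_eq_right (by rw [norm_sub_rev a, norm_sub_rev b]; exact h.le), norm_sub_rev]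
    rw [hax]
    field_simp
    ring
end
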